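/- arXiv:1709.01566 — 3 statements merged into one kernel-verified Lean document; each statement's English description precedes it below -/
import Mathlib

section
/- Under the hypotheses of the average-cost optimality equation V(r) = E[min{C(r,W), V(r+1) − V(1)}] for 1 ≤ r ≤ B−1 and V(B) = E[C(B,W)], with C(r,W) bounded and C(r,W) ≥ c_min > 0 a.s., any solution V satisfies V(1) > 0 and V(r) ≥ r·V(1) for all r ∈ {1,...,B}, and V is strictly increasing in r. -/
open MeasureTheory

/-- Any solution of the normalized average-cost optimality equation with bounded
costs `c_min ≤ C(r,W) ≤ C_max` a.s. (`c_min > 0`) satisfies `V(1) > 0`,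
`V(r) ≥ r·V(1)` for all `r ∈ {1,…,B}`, and `V` is strictly increasing on `{1,…,B}`. -/
theorem stmt_3 {Ω : Type*} [MeasurableSpace Ω] (μ : Measure Ω) [IsProbabilityMeasure μ]
    (B : ℕ) (hB : 2 ≤ B) (C : ℕ → Ω → ℝ) (cmin Cmax : ℝ) (hcmin : 0 < cmin)
    (hmeas : ∀ r, Measurable (C r))
    (hlb : ∀ r, 1 ≤ r → r ≤ B → ∀ᵐ ω ∂μ, cmin ≤ C r ω)
    (hub : ∀ r, 1 ≤ r → r ≤ B → ∀ᵐ ω ∂μ, C r ω ≤ Cmax)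
    (V : ℕ → ℝ)
    (hACOE : ∀ r, 1 ≤ r → r ≤ B - 1 →
      V r = ∫ ω, min (C r ω) (V (r + 1) - V 1) ∂μ)
    (hACOEB : V B = ∫ ω, C B ω ∂μ) :
    0 < V 1 ∧ (∀ r, 1 ≤ r → r ≤ B → (r : ℝ) * V 1 ≤ V r) ∧
    (∀ r s, 1 ≤ r → r < s → s ≤ B → V r < V s) := by
  -- integrability of `C r`
  have hint : ∀ r, 1 ≤ r → r ≤ B → Integrable (C r) μ := by
    intro r h1 h2
    refine Integrable.mono' (integrable_const Cmax) (hmeas r).aestronglyMeasurable ?_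
    filter_upwards [hlb r h1 h2, hub r h1 h2] with ω hl hu
    rw [Real.norm_eq_abs, abs_of_nonneg (le_trans hcmin.le hl)]
    exact hu
  -- integrability of truncated costs
  have hintmin : ∀ r c, 1 ≤ r → r ≤ B → Integrable (fun ω => min (C r ω) c) μ := by
    intro r c h1 h2
    refine Integrable.mono' ((hint r h1 h2).abs.add (integrable_const |c|))
      ((hmeas r).min measurable_const).aestronglyMeasurable ?_
    refine Filter.Eventually.of_forall fun ω => ?_
    simp only [Pi.add_apply, Real.norm_eq_abs]
    rcases le_total (C r ω) c with h | h
    · rw [min_eq_left h]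
      have := abs_nonneg c; linarith
    · rw [min_eq_right h]
      have := abs_nonneg (C r ω); linarith
  -- step inequality
  have hstep : ∀ r, 1 ≤ r → r ≤ B - 1 → V r ≤ V (r + 1) - V 1 := by
    intro r h1 h2
    rw [hACOE r h1 h2]
    have h2' : r ≤ B := by omega
    have := integral_mono_ae (hintmin r (V (r + 1) - V 1) h1 h2')
      (integrable_const (V (r + 1) - V 1))
      (Filter.Eventually.of_forall fun ω => min_le_right (C r ω) _)
    simpa using this
  -- lower bound from the fixed point equation
  have hlow : ∀ r, 1 ≤ r → r ≤ B - 1 → min cmin (V (r + 1) - V 1) ≤ V r := by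
    intro r h1 h2
    rw [hACOE r h1 h2]
    have h2' : r ≤ B := by omega
    have := integral_mono_ae (integrable_const (min cmin (V (r + 1) - V 1)))
      (hintmin r (V (r + 1) - V 1) h1 h2') ?_
    · simpa using this
    · filter_upwards [hlb r h1 h2'] with ω hl
      exact min_le_min hl le_rfl
  -- V B is at least cmin
  have hVB : cmin ≤ V B := by
    rw [hACOEB]
    have := integral_mono_ae (integrable_const cmin) (hint B (by omega) le_rfl)
      (hlb B (by omega) le_rfl)
    simpa using this
  -- V 1 is positive
  have hV1 : 0 < V 1 := by
    by_contra hc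
    push_neg at hc
    have key : ∀ k r, 1 ≤ r → r ≤ B → B - r ≤ k → cmin ≤ V r := by
      intro k
      induction k with
      | zero =>
        intro r h1 h2 h3
        have : r = B := by omega
        subst this; exact hVB
      | succ k ih =>
        intro r h1 h2 h3
        rcases eq_or_lt_of_le h2 with h | h
        · subst h; exact hVB
        · have hr : r ≤ B - 1 := by omega
          have hnext : cmin ≤ V (r + 1) := ih (r + 1) (by omega) (by omega) (by omega)
          have : min cmin (V (r + 1) - V 1) = cmin := by
            rw [min_eq_left]; linarith
          have h6 := hlow r h1 hr
          rw [this] at h6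
          exact h6
    have := key B 1 le_rfl (by omega) (by omega)
    linarith
  -- V r ≥ r * V 1
  have hgrow : ∀ r, 1 ≤ r → r ≤ B → (r : ℝ) * V 1 ≤ V r := by
    intro r
    induction r with
    | zero => intro h; omega
    | succ r ih =>
      intro h1 h2
      rcases Nat.eq_zero_or_pos r with h | h
      · subst h; norm_num
      · have hr : r ≤ B - 1 := by omega
        have h3 := hstep r h (by omega)
        have h4 := ih h (by omega)
        push_cast
        linarith
  refine ⟨hV1, hgrow, ?_⟩
  intro r s h1 hrs
  induction s with
  | zero => omega
  | succ s ih =>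
    intro hsB
    rcases eq_or_lt_of_le (Nat.lt_succ_iff.mp hrs) with h | h
    · subst h
      have := hstep r h1 (by omega)
      linarith
    · have h5 := hstep s (by omega) (by omega)
      have := ih h (by omega)
      linarith
end

section
/- There exists a unique vector V = (V(1),...,V(B)) ∈ ℝ^B satisfying V(r) = E[min{C(r,W), V(r+1) − V(1)}] for all 1 ≤ r ≤ B−1 and V(B) = E[C(B,W)], where C(r,W) is a bounded measurable random cost with C(r,W) ≥ c_min > 0 almost surely. Uniqueness follows because, fixing V(1) = t and solving backward, each V(r) is a continuous nonincreasing function of t, so the resulting fixed-point equation t = φ(t) with φ continuous and nonincreasing has exactly one solution. -/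
open MeasureTheory

/-- Backward recursion for the normalized ACOE: `Waux μ B C t k` is the value
`V(B - k)` obtained by fixing `V(1) = t` and solving backward from `V(B)`. -/
noncomputable def Waux {Ω : Type*} [MeasurableSpace Ω] (μ : Measure Ω)
    (B : ℕ) (C : ℕ → Ω → ℝ) (t : ℝ) : ℕ → ℝ
  | 0 => ∫ ω, C B ω ∂μ
  | (k + 1) => ∫ ω, min (C (B - (k + 1)) ω) (Waux μ B C t k - t) ∂μ

/-- Existence and uniqueness of the solution of the normalized average-cost
optimality equation: there is a vector `(V(1),…,V(B))` satisfying
`V(r) = E[min{C(r,W), V(r+1) − V(1)}]` for `1 ≤ r ≤ B−1` and `V(B) = E[C(B,W)]`,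
and it is unique (any two solutions agree on `{1,…,B}`). -/
theorem stmt_4 {Ω : Type*} [MeasurableSpace Ω] (μ : Measure Ω) [IsProbabilityMeasure μ]
    (B : ℕ) (hB : 2 ≤ B) (C : ℕ → Ω → ℝ) (cmin Cmax : ℝ) (hcmin : 0 < cmin)
    (hmeas : ∀ r, Measurable (C r))
    (hlb : ∀ r, 1 ≤ r → r ≤ B → ∀ᵐ ω ∂μ, cmin ≤ C r ω)
    (hub : ∀ r, 1 ≤ r → r ≤ B → ∀ᵐ ω ∂μ, C r ω ≤ Cmax) :
    ∃ V : ℕ → ℝ,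
      ((∀ r, 1 ≤ r → r ≤ B - 1 →
          V r = ∫ ω, min (C r ω) (V (r + 1) - V 1) ∂μ) ∧
        V B = ∫ ω, C B ω ∂μ) ∧
      ∀ V' : ℕ → ℝ,
        ((∀ r, 1 ≤ r → r ≤ B - 1 →
            V' r = ∫ ω, min (C r ω) (V' (r + 1) - V' 1) ∂μ) ∧
          V' B = ∫ ω, C B ω ∂μ) →
        ∀ r, 1 ≤ r → r ≤ B → V' r = V r := by
  -- `Cmax` dominates `cmin`
  have hc : cmin ≤ Cmax := by
    obtain ⟨ω, h1, h2⟩ := ((hlb 1 le_rfl (by omega)).and (hub 1 le_rfl (by omega))).exists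
    exact h1.trans h2
  have hCmax0 : (0 : ℝ) ≤ Cmax := le_trans hcmin.le hc
  -- integrability of the costs
  have intC : ∀ r, 1 ≤ r → r ≤ B → Integrable (C r) μ := by
    intro r h1 h2
    refine Integrable.mono' (integrable_const Cmax) (hmeas r).aestronglyMeasurable ?_
    filter_upwards [hlb r h1 h2, hub r h1 h2] with ω ha hb
    rw [Real.norm_eq_abs, abs_le]
    constructor <;> linarith
  -- integrability of the truncated costs
  have intmin : ∀ (r : ℕ) (a : ℝ), 1 ≤ r → r ≤ B →
      Integrable (fun ω => min (C r ω) a) μ := by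
    intro r a h1 h2
    refine Integrable.mono' (integrable_const (max Cmax |a|))
      ((hmeas r).min measurable_const).aestronglyMeasurable ?_
    filter_upwards [hlb r h1 h2, hub r h1 h2] with ω ha hb
    rw [Real.norm_eq_abs, abs_le]
    have h3 := le_max_left Cmax |a|
    have h4 := le_max_right Cmax |a|
    have h5 := neg_abs_le a
    have h6 := abs_nonneg a
    constructor
    · exact le_min (by linarith) (by linarith)
    · exact le_trans (min_le_left _ _) (by linarith)
  -- the terminal value is between `cmin` and `Cmax`
  have hterm_lb : cmin ≤ ∫ ω, C B ω ∂μ := by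
    have := integral_mono_ae (integrable_const cmin) (intC B (by omega) le_rfl)
      (hlb B (by omega) le_rfl)
    simpa using this
  have hterm_ub : ∫ ω, C B ω ∂μ ≤ Cmax := by
    have := integral_mono_ae (intC B (by omega) le_rfl) (integrable_const Cmax)
      (hub B (by omega) le_rfl)
    simpa using this
  -- upper bound on the backward recursion
  have W_le : ∀ (t : ℝ) (k : ℕ), k ≤ B - 1 → Waux μ B C t k ≤ Cmax := by
    intro t k hk
    cases k with
    | zero => simpa [Waux] using hterm_ub
    | succ k =>
      have h1 : 1 ≤ B - (k + 1) := by omega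
      have h2 : B - (k + 1) ≤ B := by omega
      rw [show Waux μ B C t (k + 1) =
        ∫ ω, min (C (B - (k + 1)) ω) (Waux μ B C t k - t) ∂μ from rfl]
      have := integral_mono_ae (intmin _ (Waux μ B C t k - t) h1 h2)
        (integrable_const Cmax) ?_
      · simpa using this
      · filter_upwards [hub _ h1 h2] with ω hb
        exact le_trans (min_le_left _ _) hb
  -- lower bound at `t = 0`
  have W0_ge : ∀ k : ℕ, k ≤ B - 1 → cmin ≤ Waux μ B C 0 k := by
    intro k
    induction k with
    | zero => intro _; simpa [Waux] using hterm_lb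
    | succ k ih =>
      intro hk
      have hW := ih (by omega)
      have h1 : 1 ≤ B - (k + 1) := by omega
      have h2 : B - (k + 1) ≤ B := by omega
      rw [show Waux μ B C 0 (k + 1) =
        ∫ ω, min (C (B - (k + 1)) ω) (Waux μ B C 0 k - 0) ∂μ from rfl]
      have := integral_mono_ae (integrable_const cmin)
        (intmin _ (Waux μ B C 0 k - 0) h1 h2) ?_
      · simpa using this
      · filter_upwards [hlb _ h1 h2] with ω ha
        exact le_min ha (by linarith)
  -- antitonicity in `t`
  have W_anti : ∀ k : ℕ, k ≤ B - 1 → ∀ s t : ℝ, s ≤ t →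
      Waux μ B C t k ≤ Waux μ B C s k := by
    intro k
    induction k with
    | zero => intro _ s t _; rfl
    | succ k ih =>
      intro hk s t hst
      have hW := ih (by omega) s t hst
      have h1 : 1 ≤ B - (k + 1) := by omega
      have h2 : B - (k + 1) ≤ B := by omega
      rw [show Waux μ B C t (k + 1) =
        ∫ ω, min (C (B - (k + 1)) ω) (Waux μ B C t k - t) ∂μ from rfl,
        show Waux μ B C s (k + 1) =
        ∫ ω, min (C (B - (k + 1)) ω) (Waux μ B C s k - s) ∂μ from rfl]
      exact integral_mono (intmin _ _ h1 h2) (intmin _ _ h1 h2)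
        (fun ω => min_le_min le_rfl (by linarith))
  -- Lipschitz bound in `t`
  have W_lip : ∀ k : ℕ, k ≤ B - 1 → ∀ s t : ℝ,
      |Waux μ B C t k - Waux μ B C s k| ≤ (k : ℝ) * |t - s| := by
    intro k
    induction k with
    | zero => intro _ s t; simp [Waux]
    | succ k ih =>
      intro hk s t
      have hW := ih (by omega) s t
      have h1 : 1 ≤ B - (k + 1) := by omega
      have h2 : B - (k + 1) ≤ B := by omega
      set a := Waux μ B C t k - t with ha
      set b := Waux μ B C s k - s with hb
      have key : |Waux μ B C t (k + 1) - Waux μ B C s (k + 1)| ≤ |a - b| := by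
        rw [show Waux μ B C t (k + 1) =
          ∫ ω, min (C (B - (k + 1)) ω) a ∂μ from rfl,
          show Waux μ B C s (k + 1) =
          ∫ ω, min (C (B - (k + 1)) ω) b ∂μ from rfl,
          ← integral_sub (intmin _ a h1 h2) (intmin _ b h1 h2)]
        calc |∫ ω, (min (C (B - (k + 1)) ω) a - min (C (B - (k + 1)) ω) b) ∂μ|
            ≤ ∫ ω, |min (C (B - (k + 1)) ω) a - min (C (B - (k + 1)) ω) b| ∂μ := by
              simpa [Real.norm_eq_abs] using norm_integral_le_integral_norm
                (μ := μ) (fun ω => min (C (B - (k + 1)) ω) a - min (C (B - (k + 1)) ω) b)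
          _ ≤ ∫ _ω, |a - b| ∂μ := by
              refine integral_mono ((intmin _ a h1 h2).sub (intmin _ b h1 h2)).abs
                (integrable_const _) (fun ω => ?_)
              have := abs_min_sub_min_le_max (C (B - (k + 1)) ω) a (C (B - (k + 1)) ω) b
              simpa using this
          _ = |a - b| := by simp
      have habs : |a - b| ≤ |Waux μ B C t k - Waux μ B C s k| + |t - s| := by
        have : a - b = (Waux μ B C t k - Waux μ B C s k) + (s - t) := by
          rw [ha, hb]; ring
        rw [this]
        calc |(Waux μ B C t k - Waux μ B C s k) + (s - t)|
            ≤ |Waux μ B C t k - Waux μ B C s k| + |s - t| := abs_add_le _ _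
          _ = |Waux μ B C t k - Waux μ B C s k| + |t - s| := by rw [abs_sub_comm s t]
      have : ((k : ℝ) + 1) * |t - s| = (k : ℝ) * |t - s| + |t - s| := by ring
      push_cast
      linarith
  -- continuity of `φ : t ↦ Waux μ B C t (B-1)`
  set φ : ℝ → ℝ := fun t => Waux μ B C t (B - 1) with hφ
  have hcont : Continuous φ := by
    have : LipschitzWith (B : NNReal) φ := by
      apply LipschitzWith.of_dist_le_mul
      intro t s
      simp only [Real.dist_eq, NNReal.coe_natCast]
      have h := W_lip (B - 1) le_rfl s t
      have hle : ((B - 1 : ℕ) : ℝ) ≤ (B : ℝ) := by exact_mod_cast Nat.sub_le B 1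
      have habs : (0 : ℝ) ≤ |t - s| := abs_nonneg _
      calc |φ t - φ s| ≤ ((B - 1 : ℕ) : ℝ) * |t - s| := h
        _ ≤ (B : ℝ) * |t - s| := by nlinarith
    exact this.continuous
  -- existence of a fixed point of `φ` via the intermediate value theorem
  obtain ⟨t, ht0, htC, htfix⟩ : ∃ t : ℝ, 0 ≤ t ∧ t ≤ Cmax ∧ φ t = t := by
    have hs : Set.Icc ((fun u => φ u - u) Cmax) ((fun u => φ u - u) 0) ⊆
        (fun u => φ u - u) '' Set.Icc 0 Cmax :=
      intermediate_value_Icc' hCmax0 ((hcont.sub continuous_id).continuousOn)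
    have h1 : φ Cmax - Cmax ≤ 0 := by
      have := W_le Cmax (B - 1) le_rfl; simp only [hφ]; linarith
    have h2 : (0 : ℝ) ≤ φ 0 - 0 := by
      have := W0_ge (B - 1) le_rfl; simp only [hφ]; linarith
    obtain ⟨u, hu, hequ⟩ := hs ⟨h1, h2⟩
    exact ⟨u, hu.1, hu.2, by simpa using sub_eq_zero.mp (by simpa using hequ)⟩
  -- the candidate solution
  refine ⟨fun r => Waux μ B C t (B - r), ⟨?_, ?_⟩, ?_⟩
  · -- the recursion equations
    intro r h1 h2
    have e1 : B - r = (B - r - 1) + 1 := by omega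
    have e2 : B - ((B - r - 1) + 1) = r := by omega
    have e3 : B - (r + 1) = B - r - 1 := by omega
    have eV1 : Waux μ B C t (B - 1) = t := htfix
    show Waux μ B C t (B - r) =
      ∫ ω, min (C r ω) (Waux μ B C t (B - (r + 1)) - Waux μ B C t (B - 1)) ∂μ
    rw [e1]
    rw [show Waux μ B C t ((B - r - 1) + 1) =
      ∫ ω, min (C (B - ((B - r - 1) + 1)) ω) (Waux μ B C t (B - r - 1) - t) ∂μ from rfl]
    rw [e2, e3, eV1]
  · -- terminal condition
    simp [Waux]
  · -- uniqueness
    intro V' ⟨h1', h2'⟩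
    -- any solution is given by the backward recursion from its own `V'(1)`
    have rep : ∀ j r : ℕ, 1 ≤ r → r + j = B → V' r = Waux μ B C (V' 1) j := by
      intro j
      induction j with
      | zero =>
        intro r hr hrB
        have : r = B := by omega
        subst this
        simpa [Waux] using h2'
      | succ j ih =>
        intro r hr hrB
        have hV : V' (r + 1) = Waux μ B C (V' 1) j := ih (r + 1) (by omega) (by omega)
        have e2 : B - (j + 1) = r := by omega
        rw [h1' r hr (by omega), hV]
        rw [show Waux μ B C (V' 1) (j + 1) =
          ∫ ω, min (C (B - (j + 1)) ω) (Waux μ B C (V' 1) j - V' 1) ∂μ from rfl, e2]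
    -- `V'(1)` is also a fixed point of `φ`
    have hfix' : φ (V' 1) = V' 1 := (rep (B - 1) 1 le_rfl (by omega)).symm
    -- fixed points are unique since `φ` is antitone
    have hteq : V' 1 = t := by
      rcases lt_trichotomy (V' 1) t with h | h | h
      · have := W_anti (B - 1) le_rfl (V' 1) t h.le
        rw [hφ] at hfix' htfix
        linarith
      · exact h
      · have := W_anti (B - 1) le_rfl t (V' 1) h.le
        rw [hφ] at hfix' htfix
        linarith
    intro r hr hrB
    rw [rep (B - r) r hr (by omega), hteq]
end

section
/- With f_r as in the OptAsYouGoLearning drift (f_r(V) = E[min{C(r,W), −V(1)+V(r+1)}] − V(r) for r < B, f_B(V) = E[C(B,W)] − V(B)), the scaled limits satisfy: for r < B, lim_{c→∞} f_r(cV)/c = min{0, −V(1) + V(r+1)} − V(r), and lim_{c→∞} f_B(cV)/c = −V(B); moreover for each fixed V the map c ↦ f_r(cV)/c is nonincreasing on [1, ∞), and the convergence is uniform on compact subsets of ℝ^B. -/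
open MeasureTheory Filter Topology

/-!
Writing `a = -V(1) + V(r+1)`, homogeneity of `min` gives
`f_r(cV)/c = E[min(C(r,W)/c, a)] - V(r)` and `f_B(cV)/c = E[C(B,W)]/c - V(B)`.
Since `0 ≤ C ≤ C_max`, both differ from their limits by at most `C_max / c`, a bound that does not
depend on `V`; so the convergence is uniform in `V`, and no compactness argument is needed.
Monotonicity in `c` comes from `C(r,W)/c` being nonincreasing in `c`.
-/

section

variable {Ω : Type*} [MeasurableSpace Ω] {μ : Measure Ω} {X : Ω → ℝ} {M c : ℝ}

lemma integrable_of_forall_mem_Icc [IsFiniteMeasure μ] (hX : Measurable X)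
    (hXM : ∀ ω, X ω ∈ Set.Icc 0 M) : Integrable X μ :=
  .of_bound hX.aestronglyMeasurable M <| .of_forall fun ω => by
    rw [Real.norm_eq_abs, abs_of_nonneg (hXM ω).1]
    exact (hXM ω).2

lemma integral_min_mul_div (X : Ω → ℝ) (hc : 0 < c) (a : ℝ) :
    (∫ ω, min (X ω) (c * a) ∂μ) / c = ∫ ω, min (X ω / c) a ∂μ := by
  have hmin : ∀ ω, min (X ω) (c * a) = c * min (X ω / c) a := fun ω => by
    rw [mul_min_of_nonneg _ _ hc.le, mul_div_cancel₀ _ hc.ne']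
  simp only [hmin, integral_const_mul, mul_div_cancel_left₀ _ hc.ne']

lemma antitoneOn_integral_min_div [IsFiniteMeasure μ] (hX : Integrable X μ) (hX0 : ∀ ω, 0 ≤ X ω)
    (a : ℝ) : AntitoneOn (fun c => ∫ ω, min (X ω / c) a ∂μ) (Set.Ioi 0) := by
  intro c hc c' _ hcc'
  refine integral_mono ((hX.div_const c').inf (integrable_const a))
    ((hX.div_const c).inf (integrable_const a)) fun ω => ?_
  exact min_le_min_right a (div_le_div_of_nonneg_left (hX0 ω) (Set.mem_Ioi.mp hc) hcc')

variable [IsProbabilityMeasure μ]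

lemma abs_integral_min_div_sub_min_le (hX : Integrable X μ) (hXM : ∀ ω, X ω ∈ Set.Icc 0 M)
    (hc : 0 < c) (a : ℝ) : |(∫ ω, min (X ω / c) a ∂μ) - min 0 a| ≤ M / c := by
  have hint : Integrable (fun ω => min (X ω / c) a) μ := (hX.div_const c).inf (integrable_const a)
  have hpoint : ∀ ω, ‖min (X ω / c) a - min 0 a‖ ≤ M / c := fun ω => by
    have hXc : 0 ≤ X ω / c := div_nonneg (hXM ω).1 hc.le
    calc |min (X ω / c) a - min 0 a| ≤ max |X ω / c - 0| |a - a| := abs_min_sub_min_le_max _ _ _ _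
      _ = X ω / c := by rw [sub_zero, sub_self, abs_zero, abs_of_nonneg hXc, max_eq_left hXc]
      _ ≤ M / c := by gcongr; exact (hXM ω).2
  have hbound := norm_integral_le_of_norm_le_const (μ := μ) (.of_forall hpoint)
  rwa [integral_sub hint (integrable_const _), integral_const, probReal_univ, one_smul,
    mul_one] at hbound

lemma abs_integral_div_le (hXM : ∀ ω, X ω ∈ Set.Icc 0 M) (hc : 0 < c) :
    |(∫ ω, X ω ∂μ) / c| ≤ M / c := by
  have hbound := norm_integral_le_of_norm_le_const (μ := μ) (.of_forall fun ω => by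
    rw [Real.norm_eq_abs, abs_of_nonneg (hXM ω).1]; exact (hXM ω).2)
  rw [probReal_univ, mul_one] at hbound
  rw [abs_div, abs_of_pos hc]
  gcongr
  exact hbound

end

lemma tendstoUniformly_of_abs_sub_le_div {α : Type*} {F : ℝ → α → ℝ} {G : α → ℝ} (M : ℝ)
    (h : ∀ c > 0, ∀ x, |F c x - G x| ≤ M / c) : TendstoUniformly F G atTop := by
  rw [Metric.tendstoUniformly_iff]
  intro ε hε
  have hM : Tendsto (fun c : ℝ => M / c) atTop (𝓝 0) := tendsto_const_nhds.div_atTop tendsto_id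
  filter_upwards [eventually_gt_atTop 0, hM.eventually_lt_const hε] with c hc hlt x
  rw [Real.dist_eq, abs_sub_comm]
  exact (h c hc x).trans_lt hlt

theorem stmt_15_general {Ω : Type*} [MeasurableSpace Ω] (μ : Measure Ω)
    [IsProbabilityMeasure μ] (B : ℕ) (C : ℕ → Ω → ℝ) (Cmax : ℝ)
    (hmeas : ∀ r, Measurable (C r))
    (hbdd : ∀ r ω, C r ω ∈ Set.Icc (0 : ℝ) Cmax)
    (f : ℕ → (ℕ → ℝ) → ℝ)
    (hf : ∀ (V : ℕ → ℝ) (r : ℕ), 1 ≤ r → r ≤ B - 1 →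
      f r V = (∫ ω, min (C r ω) (-(V 1) + V (r + 1)) ∂μ) - V r)
    (hfB : ∀ V : ℕ → ℝ, f B V = (∫ ω, C B ω ∂μ) - V B) :
    (∀ (V : ℕ → ℝ) (r : ℕ), 1 ≤ r → r ≤ B - 1 →
      Tendsto (fun c : ℝ => f r (fun i => c * V i) / c) atTop
        (𝓝 (min 0 (-(V 1) + V (r + 1)) - V r))) ∧
    (∀ V : ℕ → ℝ,
      Tendsto (fun c : ℝ => f B (fun i => c * V i) / c) atTop (𝓝 (-(V B)))) ∧
    (∀ (V : ℕ → ℝ) (r : ℕ), 1 ≤ r → r ≤ B →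
      AntitoneOn (fun c : ℝ => f r (fun i => c * V i) / c) (Set.Ici 1)) ∧
    (∀ (r : ℕ), 1 ≤ r → r ≤ B - 1 → ∀ R : ℝ,
      TendstoUniformlyOn
        (fun (c : ℝ) (V : ℕ → ℝ) => f r (fun i => c * V i) / c)
        (fun V : ℕ → ℝ => min 0 (-(V 1) + V (r + 1)) - V r)
        atTop
        {V : ℕ → ℝ | ∀ i, 1 ≤ i → i ≤ B → |V i| ≤ R}) := by
  have hint : ∀ r, Integrable (C r) μ := fun r => integrable_of_forall_mem_Icc (hmeas r) (hbdd r)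
  have hscale : ∀ (V : ℕ → ℝ) r, 1 ≤ r → r ≤ B - 1 → ∀ c : ℝ, 0 < c → f r (fun i => c * V i) / c =
      (∫ ω, min (C r ω / c) (-(V 1) + V (r + 1)) ∂μ) - V r := fun V r h1 h2 c hc => by
    rw [hf _ r h1 h2, sub_div, show -(c * V 1) + c * V (r + 1) = c * (-(V 1) + V (r + 1)) by ring,
      integral_min_mul_div _ hc, mul_div_cancel_left₀ _ hc.ne']
  have hscaleB : ∀ (V : ℕ → ℝ) (c : ℝ), 0 < c →
      f B (fun i => c * V i) / c = (∫ ω, C B ω ∂μ) / c - V B := fun V c hc => by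
    rw [hfB, sub_div, mul_div_cancel_left₀ _ hc.ne']
  have hunif : ∀ r, 1 ≤ r → r ≤ B - 1 → TendstoUniformly
      (fun (c : ℝ) (V : ℕ → ℝ) => f r (fun i => c * V i) / c)
      (fun V => min 0 (-(V 1) + V (r + 1)) - V r) atTop := fun r h1 h2 =>
    tendstoUniformly_of_abs_sub_le_div Cmax fun c hc V => by
      rw [hscale V r h1 h2 c hc, sub_sub_sub_cancel_right]
      exact abs_integral_min_div_sub_min_le (hint r) (hbdd r) hc _
  have hunifB : TendstoUniformly (fun (c : ℝ) (V : ℕ → ℝ) => f B (fun i => c * V i) / c)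
      (fun V => -(V B)) atTop :=
    tendstoUniformly_of_abs_sub_le_div Cmax fun c hc V => by
      rw [hscaleB V c hc, sub_neg_eq_add, sub_add_cancel]
      exact abs_integral_div_le (hbdd B) hc
  refine ⟨fun V r h1 h2 => (hunif r h1 h2).tendsto_at V, hunifB.tendsto_at,
    fun V r h1 h2 c hc c' hc' hcc' => ?_, fun r h1 h2 _ => (hunif r h1 h2).tendstoUniformlyOn⟩
  have hc0 : (0 : ℝ) < c := zero_lt_one.trans_le hc
  have hc0' : (0 : ℝ) < c' := zero_lt_one.trans_le hc'
  dsimp only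
  rcases h2.lt_or_eq with hlt | rfl
  · have hr := Nat.le_sub_one_of_lt hlt
    rw [hscale V r h1 hr c hc0, hscale V r h1 hr c' hc0']
    exact sub_le_sub_right
      (antitoneOn_integral_min_div (hint r) (fun ω => (hbdd r ω).1) _ hc0 hc0' hcc') _
  · rw [hscaleB V c hc0, hscaleB V c' hc0']
    exact sub_le_sub_right (div_le_div_of_nonneg_left
      (integral_nonneg fun ω => (hbdd r ω).1) hc0 hcc') _

/-- Scaling limits of the OptAsYouGoLearning drift: for `r < B`,
`f_r(cV)/c → min{0, −V(1)+V(r+1)} − V(r)` and `f_B(cV)/c → −V(B)` as `c → ∞`;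
moreover `c ↦ f_r(cV)/c` is nonincreasing on `[1,∞)`, and the convergence is
uniform over bounded sets of vectors `V` (hence over compacts of `ℝ^B`). -/
theorem stmt_15 {Ω : Type*} [MeasurableSpace Ω] (μ : Measure Ω)
    [IsProbabilityMeasure μ] (B : ℕ) (hB : 2 ≤ B) (C : ℕ → Ω → ℝ) (Cmax : ℝ)
    (hmeas : ∀ r, Measurable (C r))
    (hbdd : ∀ r ω, C r ω ∈ Set.Icc (0 : ℝ) Cmax)
    (f : ℕ → (ℕ → ℝ) → ℝ)
    (hf : ∀ (V : ℕ → ℝ) (r : ℕ), 1 ≤ r → r ≤ B - 1 →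
      f r V = (∫ ω, min (C r ω) (-(V 1) + V (r + 1)) ∂μ) - V r)
    (hfB : ∀ V : ℕ → ℝ, f B V = (∫ ω, C B ω ∂μ) - V B) :
    (∀ (V : ℕ → ℝ) (r : ℕ), 1 ≤ r → r ≤ B - 1 →
      Tendsto (fun c : ℝ => f r (fun i => c * V i) / c) atTop
        (𝓝 (min 0 (-(V 1) + V (r + 1)) - V r))) ∧
    (∀ V : ℕ → ℝ,
      Tendsto (fun c : ℝ => f B (fun i => c * V i) / c) atTop (𝓝 (-(V B)))) ∧
    (∀ (V : ℕ → ℝ) (r : ℕ), 1 ≤ r → r ≤ B →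
      AntitoneOn (fun c : ℝ => f r (fun i => c * V i) / c) (Set.Ici 1)) ∧
    (∀ (r : ℕ), 1 ≤ r → r ≤ B - 1 → ∀ R : ℝ,
      TendstoUniformlyOn
        (fun (c : ℝ) (V : ℕ → ℝ) => f r (fun i => c * V i) / c)
        (fun V : ℕ → ℝ => min 0 (-(V 1) + V (r + 1)) - V r)
        atTop
        {V : ℕ → ℝ | ∀ i, 1 ≤ i → i ≤ B → |V i| ≤ R}) :=
  stmt_15_general μ B C Cmax hmeas hbdd f hf hfB
end
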